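/- Define f₁(u) := ∫₀¹ u^{-p-1}(1-u)^{p-1} · sin(πp)/(πp) dp for u ∈ (0,1). Then f₁(u) ~ 1/(u²·(log u)²) as u → 0⁺; that is, lim_{u→0⁺} f₁(u)·u²·(log u)² = 1. -/

import Mathlib

/-!
Substituting `p = 1 - t` gives `u² f₁(u) = ∫₀¹ e^{-Mt} sinc(π(1 - t)) dt` with
`M = log ((1 - u) / u) → ∞`. The kernel is `t + O(t²)` on `[0, 1]`, so by Laplace's method
the integral is `1/M² + O(1/M³)`, and `M ~ -log u`.
-/

open Real

/-- `f₁(u) = ∫₀¹ u^{-p-1}(1-u)^{p-1} sin(πp)/(πp) dp`. -/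
noncomputable def f1 (u : ℝ) : ℝ :=
  ∫ p in (0:ℝ)..1, u ^ (-p - 1) * (1 - u) ^ (p - 1) * (Real.sin (π * p) / (π * p))

open Filter Set Topology MeasureTheory intervalIntegral

section Laplace

variable {M : ℝ}

lemma integral_exp_neg_mul_mul_id (hM : M ≠ 0) :
    ∫ t in (0:ℝ)..1, exp (-(M * t)) * t = (1 - (M + 1) * exp (-M)) / M ^ 2 := by
  have hderiv : ∀ t ∈ uIcc (0:ℝ) 1,
      HasDerivAt (fun t => -((M * t + 1) / M ^ 2) * exp (-(M * t))) (exp (-(M * t)) * t) t := by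
    intro t _
    have h := ((((hasDerivAt_id' t).const_mul M).add_const 1).div_const (M ^ 2)).neg.mul
      ((hasDerivAt_id' t).const_mul M).neg.exp
    refine h.congr_deriv ?_
    simp only [Pi.neg_apply]
    field_simp
    ring
  rw [integral_eq_sub_of_hasDerivAt hderiv (Continuous.intervalIntegrable (by fun_prop) _ _)]
  field_simp
  simp only [mul_zero, zero_add, neg_zero, exp_zero, mul_one, sub_neg_eq_add]
  ring

lemma integral_exp_neg_mul_mul_sq (hM : M ≠ 0) :
    ∫ t in (0:ℝ)..1, exp (-(M * t)) * t ^ 2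
      = (2 - (M ^ 2 + 2 * M + 2) * exp (-M)) / M ^ 3 := by
  have hderiv : ∀ t ∈ uIcc (0:ℝ) 1,
      HasDerivAt (fun t => -((M ^ 2 * t ^ 2 + 2 * M * t + 2) / M ^ 3) * exp (-(M * t)))
        (exp (-(M * t)) * t ^ 2) t := by
    intro t _
    have h := (((((hasDerivAt_pow 2 t).const_mul (M ^ 2)).add
      ((hasDerivAt_id' t).const_mul (2 * M))).add_const 2).div_const (M ^ 3)).neg.mul
      ((hasDerivAt_id' t).const_mul M).neg.exp
    refine h.congr_deriv ?_
    simp only [Pi.neg_apply, Pi.add_apply]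
    field_simp
    ring
  rw [integral_eq_sub_of_hasDerivAt hderiv (Continuous.intervalIntegrable (by fun_prop) _ _)]
  field_simp
  simp only [mul_zero, zero_add, zero_mul, neg_zero, exp_zero, mul_one, sub_neg_eq_add]
  ring

lemma integral_exp_neg_mul_mul_sq_le (hM : 0 < M) :
    ∫ t in (0:ℝ)..1, exp (-(M * t)) * t ^ 2 ≤ 2 / M ^ 3 := by
  rw [integral_exp_neg_mul_mul_sq hM.ne']
  gcongr
  have : 0 ≤ (M ^ 2 + 2 * M + 2) * exp (-M) := by positivity
  linarith

lemma abs_integral_exp_neg_mul_mul_le {g : ℝ → ℝ} {C : ℝ} (hM : 0 < M)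
    (hg : ∀ t ∈ Icc (0:ℝ) 1, |g t| ≤ C * t ^ 2) :
    |∫ t in (0:ℝ)..1, exp (-(M * t)) * g t| ≤ 2 * C / M ^ 3 := by
  have hC : 0 ≤ C := by simpa using (abs_nonneg _).trans (hg 1 (by simp))
  calc |∫ t in (0:ℝ)..1, exp (-(M * t)) * g t|
      ≤ ∫ t in (0:ℝ)..1, C * (exp (-(M * t)) * t ^ 2) := by
        rw [← Real.norm_eq_abs]
        refine norm_integral_le_of_norm_le zero_le_one (ae_of_all _ fun t ht => ?_) (Continuous.intervalIntegrable (by fun_prop) _ _)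
        rw [norm_mul, norm_of_nonneg (exp_pos _).le, Real.norm_eq_abs, mul_left_comm]
        gcongr
        exact hg t (Ioc_subset_Icc_self ht)
    _ = C * ∫ t in (0:ℝ)..1, exp (-(M * t)) * t ^ 2 := integral_const_mul _ _
    _ ≤ C * (2 / M ^ 3) := by gcongr; exact integral_exp_neg_mul_mul_sq_le hM
    _ = 2 * C / M ^ 3 := by ring

theorem tendsto_sq_mul_integral_exp_neg_mul {g : ℝ → ℝ} {C : ℝ}
    (hg : IntervalIntegrable g volume 0 1) (hgC : ∀ t ∈ Icc (0:ℝ) 1, |g t - t| ≤ C * t ^ 2) :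
    Tendsto (fun M => M ^ 2 * ∫ t in (0:ℝ)..1, exp (-(M * t)) * g t) atTop (𝓝 1) := by
  have hmain : Tendsto (fun M => 1 - (M + 1) * exp (-M)) atTop (𝓝 1) := by
    have h := (tendsto_pow_mul_exp_neg_atTop_nhds_zero 1).add
      (tendsto_pow_mul_exp_neg_atTop_nhds_zero 0)
    simpa [add_mul] using (tendsto_const_nhds (x := (1:ℝ))).sub h
  have herror : Tendsto (fun M => M ^ 2 * ∫ t in (0:ℝ)..1, exp (-(M * t)) * (g t - t))
      atTop (𝓝 0) := by
    refine squeeze_zero_norm' ?_ (tendsto_id.const_div_atTop (2 * C))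
    filter_upwards [eventually_gt_atTop 0] with M hM
    rw [norm_mul, norm_pow, Real.norm_eq_abs, abs_of_pos hM, id]
    calc M ^ 2 * |∫ t in (0:ℝ)..1, exp (-(M * t)) * (g t - t)| ≤ M ^ 2 * (2 * C / M ^ 3) := by
          gcongr; exact abs_integral_exp_neg_mul_mul_le hM hgC
      _ = 2 * C / M := by field_simp
  have hsum := hmain.add herror
  rw [add_zero] at hsum
  refine hsum.congr' ?_
  filter_upwards [eventually_gt_atTop 0] with M hM
  have hid : IntervalIntegrable (fun t => exp (-(M * t)) * t) volume 0 1 :=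
    Continuous.intervalIntegrable (by fun_prop) _ _
  have hexp : IntervalIntegrable (fun t => exp (-(M * t)) * g t) volume 0 1 :=
    hg.continuousOn_mul (by fun_prop)
  simp only [mul_sub, integral_sub hexp hid, integral_exp_neg_mul_mul_id hM.ne']
  field_simp
  ring

end Laplace

lemma abs_sinc_pi_mul_one_sub_sub_le {t : ℝ} (ht : t ∈ Icc (0:ℝ) 1) :
    |sinc (π * (1 - t)) - t| ≤ 2 * t ^ 2 := by
  obtain ⟨h0, h1⟩ := ht
  rcases h1.eq_or_lt with rfl | h1
  · simp
  have hpos : 0 < π * (1 - t) := mul_pos pi_pos (sub_pos.2 h1)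
  have hsinc : sinc (π * (1 - t)) = sin (π * t) / (π * (1 - t)) := by
    rw [sinc_of_ne_zero hpos.ne', mul_one_sub, sin_pi_sub]
  have hsin_nonneg : 0 ≤ sin (π * t) :=
    sin_nonneg_of_nonneg_of_le_pi (by positivity) (by nlinarith [pi_pos])
  rw [abs_le, hsinc]
  rcases le_total t (1 / 2) with ht | ht
  · have hlower : (t - 2 * t ^ 2) * (π * (1 - t)) ≤ sin (π * t) := by
      have hcube := sin_ge_sub_cube (x := π * t) (by positivity)
      have hπ2 : π ^ 2 ≤ 10 := by nlinarith [pi_lt_d2, pi_pos]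
      nlinarith [mul_le_mul_of_nonneg_left hπ2 (by positivity : 0 ≤ π * t ^ 3)]
    have hupper : sin (π * t) ≤ (t + 2 * t ^ 2) * (π * (1 - t)) := by
      have := sin_le (x := π * t) (by positivity)
      nlinarith [pi_pos, mul_nonneg (mul_nonneg pi_pos.le (sq_nonneg t)) (by linarith : 0 ≤ 1 - 2 * t)]
    constructor
    · linarith [(le_div_iff₀ hpos).2 hlower]
    · linarith [(div_le_iff₀ hpos).2 hupper]
  · constructor
    · nlinarith [div_nonneg hsin_nonneg hpos.le]
    · nlinarith [hsinc ▸ sinc_le_one (π * (1 - t))]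

lemma f1_eq_inv_sq_mul_integral {u : ℝ} (hu₀ : 0 < u) (hu₁ : u < 1) :
    f1 u = (u ^ 2)⁻¹ * ∫ t in (0:ℝ)..1, exp (-(log ((1 - u) / u) * t)) * sinc (π * (1 - t)) := by
  have hsub := integral_comp_sub_left (a := 0) (b := 1)
    (fun p => u ^ (-p - 1) * (1 - u) ^ (p - 1) * (sin (π * p) / (π * p))) 1
  simp only [sub_self, sub_zero] at hsub
  rw [f1, ← hsub, ← intervalIntegral.integral_const_mul]
  refine integral_congr_Ioo_of_le zero_le_one fun t ht => ?_
  have h1u : 0 < 1 - u := sub_pos.2 hu₁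
  have hpow : u ^ (-(1 - t) - 1) * (1 - u) ^ (1 - t - 1)
      = (u ^ 2)⁻¹ * exp (-(log ((1 - u) / u) * t)) := by
    rw [rpow_def_of_pos hu₀, rpow_def_of_pos h1u, log_div h1u.ne' hu₀.ne',
      ← exp_log (pow_pos hu₀ 2), ← exp_neg, ← exp_add, ← exp_add, log_pow]
    congr 1
    push_cast
    ring
  rw [hpow, sinc_of_ne_zero (mul_pos pi_pos (sub_pos.2 ht.2)).ne']
  ring

lemma tendsto_log_one_sub_div_self_nhdsGT_zero :
    Tendsto (fun u => log ((1 - u) / u)) (𝓝[>] 0) atTop := by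
  refine tendsto_log_atTop.comp <|
    (tendsto_inv_nhdsGT_zero.atTop_add (tendsto_const_nhds (x := (-1 : ℝ)))).congr' ?_
  filter_upwards [self_mem_nhdsWithin] with u hu
  field_simp [(mem_Ioi.1 hu).ne']
  ring

lemma tendsto_log_div_log_one_sub_div_self_nhdsGT_zero :
    Tendsto (fun u => log u / log ((1 - u) / u)) (𝓝[>] 0) (𝓝 (-1)) := by
  have hlog1 : Tendsto (fun u => log (1 - u)) (𝓝[>] 0) (𝓝 0) := by
    have : ContinuousAt (fun u => log (1 - u)) 0 := by fun_prop (disch := norm_num)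
    simpa using this.tendsto.mono_left nhdsWithin_le_nhds
  have hratio : Tendsto (fun u => log (1 - u) / log u - 1) (𝓝[>] 0) (𝓝 (-1)) := by
    simpa using (hlog1.div_atBot tendsto_log_nhdsGT_zero).sub_const 1
  have hinv := hratio.inv₀ (by norm_num)
  rw [inv_neg, inv_one] at hinv
  refine hinv.congr' ?_
  filter_upwards [Ioo_mem_nhdsGT one_pos] with u hu
  rw [log_div (sub_pos.2 hu.2).ne' hu.1.ne']
  field_simp [(log_neg hu.1 hu.2).ne]

theorem stmt7 :
    Filter.Tendsto (fun u : ℝ => f1 u * u ^ 2 * (Real.log u) ^ 2)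
      (nhdsWithin 0 (Set.Ioi 0)) (nhds 1) := by
  have hlaplace := (tendsto_sq_mul_integral_exp_neg_mul
    ((continuous_sinc.comp' (by fun_prop)).intervalIntegrable 0 1)
    fun t ht => abs_sinc_pi_mul_one_sub_sub_le ht).comp tendsto_log_one_sub_div_self_nhdsGT_zero
  have hlim := (tendsto_log_div_log_one_sub_div_self_nhdsGT_zero.pow 2).mul hlaplace
  rw [neg_one_sq, one_mul] at hlim
  refine hlim.congr' ?_
  filter_upwards [Ioo_mem_nhdsGT (by norm_num : (0:ℝ) < 1 / 2)] with u ⟨hu₀, hu₁⟩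
  have hM : log ((1 - u) / u) ≠ 0 := (log_pos ((one_lt_div hu₀).2 (by linarith))).ne'
  rw [Function.comp_apply, f1_eq_inv_sq_mul_integral hu₀ (by linarith)]
  field_simp
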